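/- arXiv:1512.09033 — 5 statements merged into one kernel-verified Lean document; each statement's English description precedes it below -/
import Mathlib

section
/- Let (u_n)_{n≥1} be a sequence of positive integers tending to infinity with n. Then ∑_{n=1}^∞ (-1)^{u_n} · F_{u_{n+1} - u_n} / (F_{u_n} · F_{u_{n+1}}) = (-1)^{u_1} / (F_{u_1} · Φ^{u_1}). -/
/-!
With `ψ = -1/Φ` the conjugate golden ratio, Binet's formula turns d'Ocagne's identity into
`(-1)^a F_{b-a} = ψ^a F_b - ψ^b F_a` (valid for all integers, with `F` extended to negative
indices). Dividing by `F_a F_b`, the `n`-th term of the series is `g(u_n) - g(u_{n+1})` with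
`g(m) = ψ^m / F_m`, so the partial sums telescope to `g(u_1) - g(u_{N+1})`. Since `|ψ| < 1`,
`g(m) → 0`, and the sum is `g(u_1) = (-1)^{u_1} / (F_{u_1} Φ^{u_1})`.
-/

open Filter Finset Topology

noncomputable def Phi : ℝ := (1 + Real.sqrt 5) / 2

def fibZ (n : ℤ) : ℤ :=
  if 0 ≤ n then (Nat.fib n.toNat : ℤ) else (-1) ^ (n.natAbs + 1) * (Nat.fib n.natAbs : ℤ)

open scoped goldenRatio

lemma fibZ_eq_intFib (n : ℤ) : fibZ n = Int.fib n := by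
  by_cases hn : 0 ≤ n
  · rw [fibZ, if_pos hn, Int.fib_of_nonneg hn]
  · obtain ⟨m, rfl⟩ : ∃ m : ℕ, n = -m := ⟨n.natAbs, by omega⟩
    rw [fibZ, if_neg hn, Int.fib_neg_natCast, Int.natAbs_neg, Int.natAbs_natCast]

lemma neg_one_zpow_mul_intFib_sub (a b : ℤ) :
    (-1 : ℝ) ^ a * Int.fib (b - a) = ψ ^ a * Int.fib b - ψ ^ b * Int.fib a := by
  have hφψ : (-1 : ℝ) ^ a = φ ^ a * ψ ^ a := by
    rw [← mul_zpow, Real.goldenRatio_mul_goldenConj]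
  have hφ : φ ^ a ≠ 0 := zpow_ne_zero a Real.goldenRatio_ne_zero
  have hψ : ψ ^ a ≠ 0 := zpow_ne_zero a Real.goldenConj_ne_zero
  rw [hφψ, Real.coe_intFib_eq, Real.coe_intFib_eq, Real.coe_intFib_eq,
    zpow_sub₀ Real.goldenRatio_ne_zero, zpow_sub₀ Real.goldenConj_ne_zero]
  field_simp
  ring

lemma neg_one_pow_mul_fibZ_sub_div {a b : ℕ} (ha : 0 < a) (hb : 0 < b) :
    (-1 : ℝ) ^ a * ((fibZ ((b : ℤ) - a) : ℝ) / (Nat.fib a * Nat.fib b)) =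
      ψ ^ a / Nat.fib a - ψ ^ b / Nat.fib b := by
  have hfa : (Nat.fib a : ℝ) ≠ 0 := by exact_mod_cast (Nat.fib_pos.mpr ha).ne'
  have hfb : (Nat.fib b : ℝ) ≠ 0 := by exact_mod_cast (Nat.fib_pos.mpr hb).ne'
  have h := neg_one_zpow_mul_intFib_sub a b
  simp only [zpow_natCast, Int.fib_natCast, Int.cast_natCast] at h
  rw [fibZ_eq_intFib]
  field_simp
  linear_combination h

lemma tendsto_natCast_fib_atTop : Tendsto (fun n => (Nat.fib n : ℝ)) atTop atTop :=
  tendsto_natCast_atTop_atTop.comp <| Nat.fib_mono.tendsto_atTop_atTop fun b =>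
    ⟨b + 5, (Nat.le_add_right b 5).trans (Nat.le_fib_self (by omega))⟩

lemma tendsto_goldenConj_pow_div_fib : Tendsto (fun n => ψ ^ n / Nat.fib n) atTop (𝓝 0) := by
  refine (tendsto_pow_atTop_nhds_zero_of_abs_lt_one ?_).div_atTop tendsto_natCast_fib_atTop
  rw [abs_lt]
  exact ⟨Real.neg_one_lt_goldenConj, Real.goldenConj_neg.trans zero_lt_one⟩

lemma goldenConj_pow_div_fib (n : ℕ) : ψ ^ n / Nat.fib n = (-1) ^ n / (Nat.fib n * Phi ^ n) := by
  rw [mul_comm, ← div_div, show Phi = φ from rfl, ← div_pow, div_eq_mul_inv (-1 : ℝ),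
    Real.inv_goldenRatio, neg_one_mul, neg_neg]

/-- If `(u_n)_{n≥1}` is a sequence of positive integers tending to
infinity, then `∑_{n=1}^∞ (-1)^{u_n} F_{u_{n+1} - u_n} / (F_{u_n} F_{u_{n+1}})
= (-1)^{u_1} / (F_{u_1} Φ^{u_1})`. -/
theorem statement2 (u : ℕ → ℕ) (hupos : ∀ n, 1 ≤ n → 1 ≤ u n)
    (hutend : Tendsto u atTop atTop) :
    Tendsto (fun N => ∑ n ∈ Finset.range N,
        (-1 : ℝ) ^ (u (n + 1)) *
          ((fibZ ((u (n + 2) : ℤ) - (u (n + 1) : ℤ)) : ℝ) /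
            ((Nat.fib (u (n + 1)) : ℝ) * (Nat.fib (u (n + 2)) : ℝ))))
      atTop
      (𝓝 ((-1 : ℝ) ^ (u 1) / ((Nat.fib (u 1) : ℝ) * Phi ^ (u 1)))) := by
  set g : ℕ → ℝ := fun m => ψ ^ m / Nat.fib m
  have hsum (N : ℕ) : ∑ n ∈ Finset.range N, (-1 : ℝ) ^ (u (n + 1)) *
      ((fibZ ((u (n + 2) : ℤ) - (u (n + 1) : ℤ)) : ℝ) /
        ((Nat.fib (u (n + 1)) : ℝ) * (Nat.fib (u (n + 2)) : ℝ))) = g (u 1) - g (u (N + 1)) := by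
    rw [← Finset.sum_range_sub' (fun n => g (u (n + 1)))]
    exact Finset.sum_congr rfl fun n _ =>
      neg_one_pow_mul_fibZ_sub_div (hupos _ n.succ_pos) (hupos _ (by omega))
  have htail : Tendsto (fun N => g (u (N + 1))) atTop (𝓝 0) :=
    tendsto_goldenConj_pow_div_fib.comp (hutend.comp (tendsto_add_atTop_nat 1))
  rw [← goldenConj_pow_div_fib]
  simpa only [hsum, sub_zero] using tendsto_const_nhds.sub htail
end

section
/- Let (u_n)_{n≥1} be an increasing arithmetic sequence of positive integers with common difference r ≥ 1. Then ∑_{n=1}^∞ (-1)^{r(n-1)} / (F_{u_n} · F_{u_{n+1}}) = 1 / (F_r · F_{u_1} · Φ^{u_1}). -/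
/-!
Binet's formula gives `F_{a+r} ψ^a - F_a ψ^{a+r} = (-1)^a F_r`, i.e.
`ψ^a / F_a - ψ^{a+r} / F_{a+r} = (-1)^a F_r / (F_a F_{a+r})`, where `ψ = -Φ⁻¹`.
Along `a = u_n` the series therefore telescopes to `(-1)^{u_1} ψ^{u_1} / (F_r F_{u_1})
= 1 / (F_r F_{u_1} Φ^{u_1})`; the tail `ψ^{u_n} / F_{u_n}` vanishes since `|ψ| < 1`.
-/

open goldenRatio

theorem HasSum.sub_succ_of_summable {G : Type*} [AddCommGroup G] [TopologicalSpace G]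
    [IsTopologicalAddGroup G] [T2Space G] {f : ℕ → G} (hf : Summable f) :
    HasSum (fun n => f n - f (n + 1)) (f 0) := by
  have h := hf.hasSum.sub ((summable_nat_add_iff 1).mpr hf).hasSum
  rwa [hf.tsum_eq_zero_add, add_sub_cancel_right] at h

theorem fib_add_mul_goldenConj_pow_sub (a r : ℕ) :
    (Nat.fib (a + r) : ℝ) * ψ ^ a - Nat.fib a * ψ ^ (a + r) = (-1) ^ a * Nat.fib r := by
  have hpow : φ ^ a * ψ ^ a = (-1 : ℝ) ^ a := by
    rw [← mul_pow, Real.goldenRatio_mul_goldenConj]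
  rw [Real.coe_fib_eq, Real.coe_fib_eq, Real.coe_fib_eq, pow_add, pow_add, ← hpow]
  field_simp
  ring

theorem goldenConj_pow_div_fib_sub {a r : ℕ} (ha : 0 < a) :
    ψ ^ a / Nat.fib a - ψ ^ (a + r) / Nat.fib (a + r) =
      (-1) ^ a * Nat.fib r / (Nat.fib a * Nat.fib (a + r)) := by
  have h₁ : (Nat.fib a : ℝ) ≠ 0 := by exact_mod_cast (Nat.fib_pos.mpr ha).ne'
  have h₂ : (Nat.fib (a + r) : ℝ) ≠ 0 := by exact_mod_cast (Nat.fib_pos.mpr (by omega)).ne'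
  rw [div_sub_div _ _ h₁ h₂, ← fib_add_mul_goldenConj_pow_sub]
  ring

theorem abs_goldenConj_lt_one : |ψ| < 1 :=
  abs_lt.mpr ⟨Real.neg_one_lt_goldenConj, Real.goldenConj_neg.trans one_pos⟩

theorem summable_goldenConj_pow_div_fib_comp {g : ℕ → ℕ} (hg : ∀ n, n ≤ g n) :
    Summable fun n => ψ ^ g n / Nat.fib (g n) := by
  refine Summable.of_norm_bounded (summable_geometric_of_lt_one (abs_nonneg ψ)
    abs_goldenConj_lt_one) fun n => ?_
  rw [Real.norm_eq_abs, abs_div, abs_pow, Nat.abs_cast]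
  calc |ψ| ^ g n / Nat.fib (g n) ≤ |ψ| ^ g n := by
        rcases Nat.eq_zero_or_pos (Nat.fib (g n)) with h | h
        · simp [h]
        · exact div_le_self (by positivity) (by exact_mod_cast h)
    _ ≤ |ψ| ^ n := pow_le_pow_of_le_one (abs_nonneg ψ) abs_goldenConj_lt_one.le (hg n)

theorem hasSum_neg_one_pow_div_fib_mul_fib {a r : ℕ} (ha : 0 < a) (hr : 0 < r) :
    HasSum (fun n : ℕ => (-1 : ℝ) ^ (r * n) / (Nat.fib (a + n * r) * Nat.fib (a + (n + 1) * r)))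
      (1 / (Nat.fib r * Nat.fib a * φ ^ a)) := by
  set c : ℕ → ℝ := fun n => ψ ^ (a + n * r) / Nat.fib (a + n * r)
  have hterm (n : ℕ) : (-1 : ℝ) ^ (r * n) / (Nat.fib (a + n * r) * Nat.fib (a + (n + 1) * r)) =
      (-1) ^ a / Nat.fib r * (c n - c (n + 1)) := by
    have hstep : a + (n + 1) * r = a + n * r + r := by ring
    have hfr : (Nat.fib r : ℝ) ≠ 0 := by exact_mod_cast (Nat.fib_pos.mpr hr).ne'
    simp only [c]
    rw [hstep, goldenConj_pow_div_fib_sub (by positivity), pow_add, mul_comm r n]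
    field_simp
    rw [← pow_mul, (Even.mul_left even_two a).neg_one_pow]
  have hc : Summable c := summable_goldenConj_pow_div_fib_comp fun n => by nlinarith
  have hinv : (φ ^ a)⁻¹ = (-1) ^ a * ψ ^ a := by
    rw [← inv_pow, Real.inv_goldenRatio, neg_pow]
  have hval : (-1) ^ a / Nat.fib r * c 0 = 1 / (Nat.fib r * Nat.fib a * φ ^ a) := by
    rw [show c 0 = ψ ^ a / Nat.fib a by simp [c], one_div, mul_inv, hinv]
    ring
  have h := (HasSum.sub_succ_of_summable hc).mul_left ((-1) ^ a / (Nat.fib r : ℝ))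
  simpa only [← hterm, hval] using h

theorem succ_eq_add_mul_of_arith {u : ℕ → ℕ} {r : ℕ} (h : ∀ n, 1 ≤ n → u (n + 1) = u n + r)
    (n : ℕ) : u (n + 1) = u 1 + n * r := by
  induction n with
  | zero => simp
  | succ n ih => rw [h (n + 1) (by omega), ih]; ring

/-- Let `(u_n)_{n≥1}` be an increasing arithmetic sequence of positive
integers with common difference `r ≥ 1`. Then
`∑_{n=1}^∞ (-1)^{r(n-1)} / (F_{u_n} F_{u_{n+1}}) = 1 / (F_r F_{u_1} Φ^{u_1})`. -/
theorem statement4 (u : ℕ → ℕ) (r : ℕ) (hr : 1 ≤ r) (hu1 : 1 ≤ u 1)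
    (harith : ∀ n, 1 ≤ n → u (n + 1) = u n + r) :
    ∑' n : ℕ, (-1 : ℝ) ^ (r * n) /
        ((Nat.fib (u (n + 1)) : ℝ) * (Nat.fib (u (n + 2)) : ℝ)) =
      1 / ((Nat.fib r : ℝ) * (Nat.fib (u 1) : ℝ) * Phi ^ (u 1)) := by
  have hu (n : ℕ) := succ_eq_add_mul_of_arith harith n
  rw [show Phi = φ from rfl]
  convert (hasSum_neg_one_pow_div_fib_mul_fib hu1 hr).tsum_eq using 5 with n
  · rw [hu n]
  · rw [hu (n + 1)]
end

section
/- Let k be a positive integer and a ≥ 2 an integer. Then ∑_{n=1}^∞ F_{(a-1)·k·a^n} / (F_{k·a^n} · F_{k·a^{n+1}}) = 1 / (F_{ka} · Φ^{ka}). -/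
/-!
By Binet's formula, `F_m Φ^m = (Φ^{2m} - (-1)^m)/√5`. For `t ≥ 1` and even `d` this gives
`F_d / (F_t F_{t+d}) = 1/(F_t Φ^t) - 1/(F_{t+d} Φ^{t+d})`, so with `t = k a^n`, `d = (a-1) k a^n`
(even, since `a(a-1)` is) the series telescopes to its first term `1/(F_{ka} Φ^{ka})`.
-/

open Filter Finset Topology
open scoped goldenRatio

lemma Phi_eq_goldenRatio : Phi = φ := by
  unfold Phi Real.goldenRatio
  norm_num

lemma coe_fib_mul_goldenRatio_pow (m : ℕ) :
    (Nat.fib m : ℝ) * φ ^ m = (φ ^ (2 * m) - (-1) ^ m) / √5 := by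
  rw [Real.coe_fib_eq, two_mul, pow_add, ← Real.goldenRatio_mul_goldenConj, mul_pow,
    div_mul_eq_mul_div, sub_mul, mul_comm (ψ ^ m)]

lemma coe_fib_div_fib_mul_fib_add {t d : ℕ} (ht : t ≠ 0) (hd : Even d) :
    (Nat.fib d : ℝ) / ((Nat.fib t : ℝ) * (Nat.fib (t + d) : ℝ)) =
      1 / ((Nat.fib t : ℝ) * φ ^ t) - 1 / ((Nat.fib (t + d) : ℝ) * φ ^ (t + d)) := by
  have hft : (0 : ℝ) < Nat.fib t := by exact_mod_cast Nat.fib_pos.2 (Nat.pos_of_ne_zero ht)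
  have hftd : (0 : ℝ) < Nat.fib (t + d) := by exact_mod_cast Nat.fib_pos.2 (by omega)
  have hφ : (0 : ℝ) < φ := Real.goldenRatio_pos
  have binet : (Nat.fib d : ℝ) * φ ^ (t + (t + d)) =
      (Nat.fib (t + d) : ℝ) * φ ^ (t + d) - (Nat.fib t : ℝ) * φ ^ t := by
    have hsign : (-1 : ℝ) ^ (t + d) = (-1) ^ t := by rw [pow_add, hd.neg_one_pow, mul_one]
    rw [show t + (t + d) = d + 2 * t by ring, pow_add, ← mul_assoc,
      coe_fib_mul_goldenRatio_pow, coe_fib_mul_goldenRatio_pow, coe_fib_mul_goldenRatio_pow,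
      hd.neg_one_pow, hsign]
    ring
  rw [div_sub_div _ _ (by positivity) (by positivity),
    div_eq_div_iff (by positivity) (by positivity)]
  linear_combination ((Nat.fib t : ℝ) * (Nat.fib (t + d) : ℝ)) * binet

lemma tendsto_one_div_coe_fib_mul_goldenRatio_pow :
    Tendsto (fun m : ℕ => 1 / ((Nat.fib m : ℝ) * φ ^ m)) atTop (𝓝 0) := by
  have hφpow : Tendsto (fun m : ℕ => φ ^ m) atTop atTop :=
    tendsto_pow_atTop_atTop_of_one_lt Real.one_lt_goldenRatio
  have hle : ∀ᶠ m : ℕ in atTop, φ ^ m ≤ (Nat.fib m : ℝ) * φ ^ m := by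
    filter_upwards [eventually_ge_atTop 1] with m hm
    have : (1 : ℝ) ≤ Nat.fib m := by exact_mod_cast Nat.fib_pos.2 hm
    nlinarith [pow_pos Real.goldenRatio_pos m]
  simp only [one_div]
  exact tendsto_inv_atTop_zero.comp (tendsto_atTop_mono' atTop hle hφpow)

lemma hasSum_sub_succ_of_antitone {g : ℕ → ℝ} (hg : Antitone g) (hlim : Tendsto g atTop (𝓝 0)) :
    HasSum (fun n => g n - g (n + 1)) (g 0) := by
  rw [hasSum_iff_tendsto_nat_of_nonneg fun n => sub_nonneg.2 (hg n.le_succ)]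
  simp only [sum_range_sub']
  simpa using tendsto_const_nhds.sub hlim

theorem hasSum_coe_fib_sub_div_fib_mul_fib {t : ℕ → ℕ} (hpos : ∀ n, t n ≠ 0)
    (hmono : Monotone t) (htend : Tendsto t atTop atTop) (heven : ∀ n, Even (t (n + 1) - t n)) :
    HasSum (fun n => (Nat.fib (t (n + 1) - t n) : ℝ) / ((Nat.fib (t n) : ℝ) * Nat.fib (t (n + 1))))
      (1 / ((Nat.fib (t 0) : ℝ) * φ ^ t 0)) := by
  set g : ℕ → ℝ := fun n => 1 / ((Nat.fib (t n) : ℝ) * φ ^ t n)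
  have hterm : ∀ n, (Nat.fib (t (n + 1) - t n) : ℝ) / ((Nat.fib (t n) : ℝ) * Nat.fib (t (n + 1)))
      = g n - g (n + 1) := fun n => by
    have := coe_fib_div_fib_mul_fib_add (hpos n) (heven n)
    rwa [Nat.add_sub_cancel' (hmono n.le_succ)] at this
  simp only [hterm]
  refine hasSum_sub_succ_of_antitone (antitone_nat_of_succ_le fun n => ?_)
    (tendsto_one_div_coe_fib_mul_goldenRatio_pow.comp htend)
  rw [← sub_nonneg, ← hterm]
  positivity

/-- For a positive integer `k` and an integer `a ≥ 2`:
`∑_{n=1}^∞ F_{(a-1)k a^n} / (F_{k a^n} F_{k a^{n+1}}) = 1 / (F_{ka} Φ^{ka})`. -/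
theorem statement5 (k : ℕ) (hk : 1 ≤ k) (a : ℕ) (ha : 2 ≤ a) :
    ∑' n : ℕ, (Nat.fib ((a - 1) * k * a ^ (n + 1)) : ℝ) /
        ((Nat.fib (k * a ^ (n + 1)) : ℝ) * (Nat.fib (k * a ^ (n + 2)) : ℝ)) =
      1 / ((Nat.fib (k * a) : ℝ) * Phi ^ (k * a)) := by
  set t : ℕ → ℕ := fun n => k * a ^ (n + 1)
  have hstep : ∀ n, t (n + 1) - t n = (a - 1) * k * a ^ (n + 1) := fun n => by
    show k * a ^ (n + 1 + 1) - k * a ^ (n + 1) = _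
    rw [← Nat.mul_sub, pow_succ a (n + 1), ← Nat.mul_sub_one]
    ring
  have hmono : StrictMono t := strictMono_nat_of_lt_succ fun n =>
    Nat.mul_lt_mul_of_pos_left (Nat.pow_lt_pow_right ha (by omega)) hk
  have heven : ∀ n, Even (t (n + 1) - t n) := fun n => by
    rw [hstep, show (a - 1) * k * a ^ (n + 1) = a * (a - 1) * (k * a ^ n) by ring]
    exact (Nat.even_mul_pred_self a).mul_right _
  have hsum := hasSum_coe_fib_sub_div_fib_mul_fib (fun n => by positivity) hmono.monotone
    hmono.tendsto_atTop heven
  simp only [hstep, t, zero_add, pow_one] at hsum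
  rw [Phi_eq_goldenRatio, hsum.tsum_eq]
end

section
/- ∑_{n=0}^∞ L_{3^n} / F_{3^{n+1}} = (√5 − 1)/2. -/
open Filter Finset Topology

/-- The Lucas sequence: `L_0 = 2`, `L_1 = 1`, `L_{n+2} = L_n + L_{n+1}`. -/
def lucas : ℕ → ℕ
  | 0 => 2
  | 1 => 1
  | n + 2 => lucas n + lucas (n + 1)

/-!
The series telescopes. For odd `m`, d'Ocagne's identity
`F_{3m-1} F_m - F_{3m} F_{m-1} = F_{2m} = F_m L_m` gives
`L_m / F_{3m} = F_{3m-1} / F_{3m} - F_{m-1} / F_m`, so with `m = 3^k` the partial sums are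
`F_{3^N - 1} / F_{3^N}`, which tend to `1/φ = (√5 - 1)/2`.
-/

theorem Int.fib_add_sub_one_mul_fib_sub_fib_add_mul_fib_sub_one (k m : ℤ) :
    fib (k + m - 1) * fib m - fib (k + m) * fib (m - 1) = -(-1) ^ m.natAbs * fib k := by
  have hsplit := fib_add k (m - 1)
  rw [sub_add_cancel, ← add_sub_assoc] at hsplit
  rw [hsplit, fib_add, ← fib_succ_mul_fib_pred_sub_fib_sq m]
  ring

theorem lucas_add_fib (n : ℕ) : lucas n + Nat.fib n = 2 * Nat.fib (n + 1) := by
  induction n using Nat.twoStepInduction with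
  | zero => simp [lucas]
  | one => simp [lucas]
  | more n _ _ =>
    rw [lucas, Nat.fib_add_two, Nat.fib_add_two]
    omega

theorem fib_mul_lucas (n : ℕ) : Nat.fib n * lucas n = Nat.fib (2 * n) := by
  rw [Nat.fib_two_mul, ← lucas_add_fib, Nat.add_sub_cancel]

theorem lucas_div_fib_three_mul {m : ℕ} (hm : Odd m) :
    (lucas m / Nat.fib (3 * m) : ℝ) =
      Nat.fib (3 * m - 1) / Nat.fib (3 * m) - Nat.fib (m - 1) / Nat.fib m := by
  have hm0 : 0 < m := hm.pos
  have hdOcagne := Int.fib_add_sub_one_mul_fib_sub_fib_add_mul_fib_sub_one (2 * m) m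
  rw [Int.natAbs_natCast, hm.neg_one_pow,
    show (2 * m + m - 1 : ℤ) = ((3 * m - 1 : ℕ) : ℤ) by omega,
    show (2 * m + m : ℤ) = ((3 * m : ℕ) : ℤ) by omega,
    show (m - 1 : ℤ) = ((m - 1 : ℕ) : ℤ) by omega,
    show (2 * m : ℤ) = ((2 * m : ℕ) : ℤ) by omega] at hdOcagne
  simp only [Int.fib_natCast, ← fib_mul_lucas] at hdOcagne
  have hfm : (Nat.fib m : ℝ) ≠ 0 := Nat.cast_ne_zero.2 (Nat.fib_pos.2 hm0).ne'
  have hf3m : (Nat.fib (3 * m) : ℝ) ≠ 0 := Nat.cast_ne_zero.2 (Nat.fib_pos.2 (by omega)).ne'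
  have hreal := congrArg (Int.cast : ℤ → ℝ) hdOcagne
  push_cast at hreal
  field_simp
  linear_combination -hreal

theorem sum_range_lucas_div_fib (N : ℕ) :
    ∑ k ∈ range N, (lucas (3 ^ k) / Nat.fib (3 ^ (k + 1)) : ℝ) =
      Nat.fib (3 ^ N - 1) / Nat.fib (3 ^ N) := by
  induction N with
  | zero => simp
  | succ N ih =>
    rw [sum_range_succ, ih, pow_succ', lucas_div_fib_three_mul (Odd.pow (by decide))]
    ring

theorem tendsto_fib_sub_one_div_fib :
    Tendsto (fun n ↦ (Nat.fib (n - 1) / Nat.fib n : ℝ)) atTop (𝓝 (-Real.goldenConj)) :=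
  (tendsto_fib_div_fib_succ_atTop.comp (tendsto_sub_atTop_nat 1)).congr'
    ((eventually_ge_atTop 1).mono fun n hn ↦ by rw [Function.comp_apply, Nat.sub_add_cancel hn])

/-- `∑_{n=0}^∞ L_{3^n} / F_{3^{n+1}} = (√5 - 1)/2`. -/
theorem statement7 :
    ∑' n : ℕ, (lucas (3 ^ n) : ℝ) / (Nat.fib (3 ^ (n + 1)) : ℝ) =
      (Real.sqrt 5 - 1) / 2 := by
  have hpartial : Tendsto (fun N ↦ ∑ k ∈ range N, (lucas (3 ^ k) / Nat.fib (3 ^ (k + 1)) : ℝ))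
      atTop (𝓝 (-Real.goldenConj)) := by
    simp_rw [sum_range_lucas_div_fib]
    exact tendsto_fib_sub_one_div_fib.comp
      (tendsto_pow_atTop_atTop_of_one_lt (by norm_num : 1 < 3))
  rw [((hasSum_iff_tendsto_nat_of_nonneg (fun _ ↦ by positivity) _).2 hpartial).tsum_eq,
    Real.goldenConj]
  ring
end

section
/- Let (u_n)_{n≥1} be an increasing arithmetic sequence of positive integers with common difference r ≥ 1. Then for any positive integer k: ∑_{n=1}^∞ (-1)^{(r-1)(n-1)} / (F_{u_n} · F_{u_{n+2k}}) = (F_r / F_{2kr}) · ∑_{n=1}^{k} 1 / (F_{u_{2n}} · F_{u_{2n-1}}). -/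
/-!
With `a = u₁` the terms are `u_{n+1} = a + n r`; put `w n = (-1)^n F_{s+1} / F_s` at
`s = a + n r`.
d'Ocagne's identity `F_{m+1} F_{m+c} - F_m F_{m+c+1} = (-1)^m F_c` with `c = 2kr` turns the `n`-th
summand into `(-1)^a (w n - w (n + 2k)) / F_{2kr}`, so the series telescopes to `(-1)^a / F_{2kr}`
times `w 0 + ⋯ + w (2k - 1)`. With `c = r`, the same identity evaluates each pair
`w (2j) + w (2j + 1)` as `(-1)^a F_r / (F_{u_{2j+1}} F_{u_{2j+2}})`. The tails of the telescoping
sums are sums of such pairs and vanish because `F_s` grows at least like `φ^s`.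
-/

open Filter Finset Topology

theorem Nat.fib_succ_mul_fib_add_sub_fib_mul_fib_add_succ {R : Type*} [CommRing R] (m c : ℕ) :
    (fib (m + 1) : R) * fib (m + c) - fib m * fib (m + c + 1) = (-1) ^ m * fib c := by
  induction m with
  | zero => simp
  | succ m ih =>
    rw [show m + 1 + c = m + c + 1 by ring]
    push_cast [fib_add_two, pow_succ]
    linear_combination -ih

theorem Nat.fib_succ_div_fib_sub_fib_succ_div_fib {K : Type*} [Field K] [CharZero K] {m : ℕ}
    (hm : m ≠ 0) (c : ℕ) :
    (fib (m + 1) : K) / fib m - fib (m + c + 1) / fib (m + c) =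
      (-1) ^ m * fib c / (fib m * fib (m + c)) := by
  have h₁ : (fib m : K) ≠ 0 := by simpa using hm
  have h₂ : (fib (m + c) : K) ≠ 0 := by simp [hm]
  rw [div_sub_div _ _ h₁ h₂, fib_succ_mul_fib_add_sub_fib_mul_fib_add_succ]

theorem Nat.goldenRatio_pow_le_fib_add_two (n : ℕ) : Real.goldenRatio ^ n ≤ fib (n + 2) := by
  rw [← Real.fib_succ_sub_goldenConj_mul_fib, fib_add_two, cast_add]
  nlinarith [Real.neg_one_lt_goldenConj, (fib n).cast_nonneg (α := ℝ)]

theorem summable_inv_fib_comp {a : ℕ → ℕ} (ha : ∀ n, n + 1 ≤ a n) :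
    Summable fun n ↦ (Nat.fib (a n) : ℝ)⁻¹ := by
  have hpos : ∀ n, (0 : ℝ) < Nat.fib (n + 1) := fun n ↦ by
    exact_mod_cast Nat.fib_pos.2 n.succ_pos
  have hgeom : Summable fun n ↦ (Nat.fib (n + 2) : ℝ)⁻¹ := by
    refine .of_nonneg_of_le (fun n ↦ (inv_pos.2 (hpos (n + 1))).le) (fun n ↦ ?_)
      (summable_geometric_of_lt_one (inv_nonneg.2 Real.goldenRatio_pos.le)
        (inv_lt_one_of_one_lt₀ Real.one_lt_goldenRatio))
    rw [inv_pow]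
    exact inv_anti₀ (pow_pos Real.goldenRatio_pos n) (Nat.goldenRatio_pow_le_fib_add_two n)
  have hsucc : Summable fun n ↦ (Nat.fib (n + 1) : ℝ)⁻¹ := by
    rw [← summable_nat_add_iff 1]
    exact hgeom
  refine .of_nonneg_of_le (fun n ↦ inv_nonneg.2 (Nat.cast_nonneg _)) (fun n ↦ ?_) hsucc
  exact inv_anti₀ (hpos n) (by exact_mod_cast Nat.fib_mono (ha n))

theorem tsum_sub_add_eq_sum_range {G : Type*} [AddCommGroup G] [TopologicalSpace G]
    [IsTopologicalAddGroup G] [T2Space G] {w : ℕ → G} {m : ℕ}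
    (hs : Summable fun n ↦ w n - w (n + m))
    (htail : Tendsto (fun N ↦ ∑ i ∈ range m, w (N + i)) atTop (𝓝 0)) :
    ∑' n, (w n - w (n + m)) = ∑ i ∈ range m, w i := by
  have hpartial : ∀ N, ∑ n ∈ range N, (w n - w (n + m)) =
      ∑ i ∈ range m, w i - ∑ i ∈ range m, w (N + i) := fun N ↦ by
    have h₁ := sum_range_add w m N
    rw [add_comm m N, sum_range_add] at h₁
    simp only [add_comm m] at h₁
    rw [sum_sub_distrib, sub_eq_sub_iff_add_eq_add, h₁, add_comm]
  refine tendsto_nhds_unique hs.tendsto_sum_tsum_nat ?_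
  simpa [hpartial] using (tendsto_const_nhds (x := ∑ i ∈ range m, w i)).sub htail

theorem sum_range_two_mul {M : Type*} [AddCommMonoid M] (f : ℕ → M) (k : ℕ) :
    ∑ i ∈ range (2 * k), f i = ∑ j ∈ range k, (f (2 * j) + f (2 * j + 1)) := by
  induction k with
  | zero => simp
  | succ k ih => rw [mul_add, sum_range_succ, sum_range_succ, sum_range_succ, ih, add_assoc]

theorem tendsto_sum_range_two_mul_of_tendsto_add_succ {G : Type*} [AddCommGroup G]
    [TopologicalSpace G] [IsTopologicalAddGroup G] {w : ℕ → G}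
    (hpair : Tendsto (fun n ↦ w n + w (n + 1)) atTop (𝓝 0)) (k : ℕ) :
    Tendsto (fun N ↦ ∑ i ∈ range (2 * k), w (N + i)) atTop (𝓝 0) := by
  simp only [sum_range_two_mul fun i ↦ w (_ + i)]
  rw [← sum_const_zero (s := range k)]
  refine tendsto_finsetSum _ fun j _ ↦ ?_
  exact hpair.comp (tendsto_add_atTop_nat (2 * j)) |>.congr fun N ↦ by simp [add_assoc]

section ArithmeticProgression

open Nat

noncomputable def altFibRatio (a r n : ℕ) : ℝ :=
  (-1) ^ n * (fib (a + n * r + 1) / fib (a + n * r))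

variable {a r : ℕ}

theorem altFibRatio_sub_altFibRatio_add_two_mul (ha : a ≠ 0) (hr : r ≠ 0) (k n : ℕ) :
    altFibRatio a r n - altFibRatio a r (n + 2 * k) =
      (-1) ^ a * (fib (2 * k * r) *
        ((-1) ^ ((r - 1) * n) / (fib (a + n * r) * fib (a + (n + 2 * k) * r)))) := by
  have hsign : (-1 : ℝ) ^ n * (-1) ^ (a + n * r) = (-1) ^ a * (-1) ^ ((r - 1) * n) := by
    obtain ⟨s, rfl⟩ := exists_eq_add_one_of_ne_zero hr
    rw [← pow_add, ← pow_add, show n + (a + n * (s + 1)) = a + (s + 1 - 1) * n + 2 * n by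
      rw [Nat.add_sub_cancel]; ring, pow_add, pow_mul]
    norm_num
  have hshift : a + (n + 2 * k) * r = a + n * r + 2 * k * r := by ring
  rw [altFibRatio, altFibRatio, pow_add, pow_mul, neg_one_sq, one_pow, mul_one, ← mul_sub,
    hshift, fib_succ_div_fib_sub_fib_succ_div_fib (by omega), ← mul_div_assoc, ← mul_assoc,
    hsign]
  ring

theorem altFibRatio_add_altFibRatio_succ (ha : a ≠ 0) (n : ℕ) :
    altFibRatio a r n + altFibRatio a r (n + 1) =
      (-1) ^ n * (-1) ^ (a + n * r) * fib r / (fib (a + n * r) * fib (a + (n + 1) * r)) := by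
  rw [altFibRatio, altFibRatio, pow_succ, Nat.add_one_mul n r, ← add_assoc, mul_neg_one, neg_mul,
    ← sub_eq_add_neg, ← mul_sub, fib_succ_div_fib_sub_fib_succ_div_fib (by omega)]
  ring

theorem succ_le_add_mul (ha : a ≠ 0) (hr : r ≠ 0) (n : ℕ) : n + 1 ≤ a + n * r := by
  nlinarith [Nat.one_le_iff_ne_zero.2 ha, Nat.one_le_iff_ne_zero.2 hr]

theorem one_le_fib_add_mul (ha : a ≠ 0) (hr : r ≠ 0) (n : ℕ) :
    (1 : ℝ) ≤ fib (a + n * r) := by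
  exact_mod_cast fib_pos.2 (by have := succ_le_add_mul ha hr n; omega)

theorem summable_neg_one_pow_div_fib_mul_fib (ha : a ≠ 0) (hr : r ≠ 0) (k : ℕ) :
    Summable fun n ↦
      (-1 : ℝ) ^ ((r - 1) * n) / (fib (a + n * r) * fib (a + (n + 2 * k) * r)) := by
  refine .of_norm_bounded (summable_inv_fib_comp (succ_le_add_mul ha hr)) fun n ↦ ?_
  have h₀ : (0 : ℝ) < fib (a + n * r) := one_pos.trans_le (one_le_fib_add_mul ha hr n)
  simp only [norm_div, norm_mul, norm_pow, norm_neg, norm_one, one_pow, Real.norm_natCast, one_div]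
  exact inv_anti₀ h₀ (le_mul_of_one_le_right h₀.le (one_le_fib_add_mul ha hr (n + 2 * k)))

theorem tendsto_altFibRatio_add_altFibRatio_succ (ha : a ≠ 0) (hr : r ≠ 0) :
    Tendsto (fun n ↦ altFibRatio a r n + altFibRatio a r (n + 1)) atTop (𝓝 0) := by
  have hinv := (summable_inv_fib_comp (succ_le_add_mul ha hr)).tendsto_atTop_zero.const_mul
    (fib r : ℝ)
  rw [mul_zero] at hinv
  refine squeeze_zero_norm (fun n ↦ ?_) hinv
  have h₀ : (0 : ℝ) < fib (a + n * r) := one_pos.trans_le (one_le_fib_add_mul ha hr n)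
  rw [altFibRatio_add_altFibRatio_succ ha]
  simp only [div_eq_mul_inv, norm_mul, norm_inv, norm_pow, norm_neg, norm_one, one_pow, one_mul,
    Real.norm_natCast]
  exact mul_le_mul_of_nonneg_left
    (inv_anti₀ h₀ (le_mul_of_one_le_right h₀.le (one_le_fib_add_mul ha hr (n + 1))))
    (Nat.cast_nonneg _)

theorem sum_range_two_mul_altFibRatio (ha : a ≠ 0) (k : ℕ) :
    ∑ i ∈ range (2 * k), altFibRatio a r i =
      (-1) ^ a * (fib r *
        ∑ n ∈ range k, (1 : ℝ) / (fib (a + (2 * n + 1) * r) * fib (a + 2 * n * r))) := by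
  rw [← mul_assoc, sum_range_two_mul, mul_sum]
  refine sum_congr rfl fun j _ ↦ ?_
  rw [altFibRatio_add_altFibRatio_succ ha, pow_mul, neg_one_sq, one_pow, one_mul, pow_add,
    mul_assoc 2, pow_mul, neg_one_sq, one_pow, mul_one]
  ring

theorem tsum_neg_one_pow_div_fib_mul_fib (ha : a ≠ 0) (hr : r ≠ 0) {k : ℕ} (hk : k ≠ 0) :
    ∑' n, (-1 : ℝ) ^ ((r - 1) * n) / (fib (a + n * r) * fib (a + (n + 2 * k) * r)) =
      fib r / fib (2 * k * r) *
        ∑ n ∈ range k, (1 : ℝ) / (fib (a + (2 * n + 1) * r) * fib (a + 2 * n * r)) := by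
  have hF : (fib (2 * k * r) : ℝ) ≠ 0 := by simp [hk, hr]
  have hsum : Summable fun n ↦ altFibRatio a r n - altFibRatio a r (n + 2 * k) := by
    simp only [altFibRatio_sub_altFibRatio_add_two_mul ha hr]
    exact ((summable_neg_one_pow_div_fib_mul_fib ha hr k).mul_left _).mul_left _
  have htele := tsum_sub_add_eq_sum_range hsum <|
    tendsto_sum_range_two_mul_of_tendsto_add_succ (tendsto_altFibRatio_add_altFibRatio_succ ha hr) k
  simp only [altFibRatio_sub_altFibRatio_add_two_mul ha hr, tsum_mul_left,
    sum_range_two_mul_altFibRatio ha] at htele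
  rw [mul_right_inj' (pow_ne_zero a (by norm_num))] at htele
  rw [div_mul_eq_mul_div, eq_div_iff hF, mul_comm, htele]

end ArithmeticProgression

/-- Let `(u_n)_{n≥1}` be an increasing arithmetic sequence of positive
integers with common difference `r ≥ 1`. Then for any positive integer `k`:
`∑_{n=1}^∞ (-1)^{(r-1)(n-1)} / (F_{u_n} F_{u_{n+2k}})
= (F_r / F_{2kr}) ∑_{n=1}^k 1 / (F_{u_{2n}} F_{u_{2n-1}})`. -/
theorem statement12 (u : ℕ → ℕ) (r : ℕ) (hr : 1 ≤ r) (hu1 : 1 ≤ u 1)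
    (harith : ∀ n, 1 ≤ n → u (n + 1) = u n + r) (k : ℕ) (hk : 1 ≤ k) :
    ∑' n : ℕ, (-1 : ℝ) ^ ((r - 1) * n) /
        ((Nat.fib (u (n + 1)) : ℝ) * (Nat.fib (u (n + 1 + 2 * k)) : ℝ)) =
      ((Nat.fib r : ℝ) / (Nat.fib (2 * k * r) : ℝ)) *
        ∑ n ∈ Finset.range k,
          1 / ((Nat.fib (u (2 * n + 2)) : ℝ) * (Nat.fib (u (2 * n + 1)) : ℝ)) := by
  set a := u 1
  have hu : ∀ n, u (n + 1) = a + n * r := fun n ↦ by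
    induction n with
    | zero => simp [a]
    | succ n ih => rw [harith (n + 1) (by omega), ih]; ring
  have hu2 : ∀ n, u (2 * n + 2) = a + (2 * n + 1) * r := fun n ↦ hu (2 * n + 1)
  have hu3 : ∀ n, u (n + 1 + 2 * k) = a + (n + 2 * k) * r := fun n ↦ by
    rw [add_right_comm]; exact hu _
  simp only [hu3, hu2, hu]
  exact tsum_neg_one_pow_div_fib_mul_fib (by omega) (by omega) (by omega)
end
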